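/- arXiv:2202.04715 — 2 statements merged into one kernel-verified Lean document; each statement's English description precedes it below -/
import Mathlib

section
/- Let (X, 𝒜, ν) be a measure space with ν a finite measure, let v : X → ℝ be measurable and integrable on the set {v > 0}, and let V > 0, C > 0, δ > 0 be constants such that ∫_{{v>0}} v dν ≤ V and, for every s ≥ 0, ∫_{{v>s}} (v − s) dν ≤ C·(ν({v > s}))^{1+δ}. Then v ≤ (2C)^{1/δ}·V + 1/(1 − 2^{−δ}) holds ν-almost everywhere. -/
open MeasureTheory Finset

/-- Steps 3–4 of the proof of Lemma 2: from the level-set energy estimate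
`∫_{v>s}(v−s)dν ≤ C ν({v>s})^(1+δ)` for all `s ≥ 0`, together with
`∫_{v>0} v dν ≤ V`, the De Giorgi iteration yields the a.e. upper bound
`v ≤ (2C)^(1/δ)·V + 1/(1 − 2^(−δ))`. -/
theorem stmt_1 {X : Type*} [MeasurableSpace X] (ν : Measure X) [IsFiniteMeasure ν]
    (v : X → ℝ) (hv : Measurable v)
    (hint : IntegrableOn v {x | 0 < v x} ν)
    (V C δ : ℝ) (hV : 0 < V) (hC : 0 < C) (hδ : 0 < δ)
    (hbound : ∫ x in {x | 0 < v x}, v x ∂ν ≤ V)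
    (hkey : ∀ s : ℝ, 0 ≤ s →
      ∫ x in {x | s < v x}, (v x - s) ∂ν ≤ C * ((ν {x | s < v x}).toReal) ^ (1 + δ)) :
    ∀ᵐ x ∂ν, v x ≤ (2 * C) ^ (1 / δ) * V + 1 / (1 - 2 ^ (-δ)) := by
  have h2C : (0:ℝ) < 2 * C := by linarith
  set s₀ : ℝ := (2 * C) ^ (1 / δ) * V with hs₀def
  have hs₀pos : 0 < s₀ := mul_pos (Real.rpow_pos_of_pos h2C _) hV
  set r : ℝ := (2:ℝ) ^ (-δ) with hrdef
  have hr0 : 0 < r := Real.rpow_pos_of_pos two_pos _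
  have hr1 : r < 1 := Real.rpow_lt_one_of_one_lt_of_neg one_lt_two (by linarith)
  set K : ℝ := (2 * C) ^ (-(1 / δ)) with hKdef
  have hKpos : 0 < K := Real.rpow_pos_of_pos h2C _
  set sn : ℕ → ℝ := fun n => s₀ + ∑ k ∈ Finset.range n, r ^ k with hsndef
  have hsn0 : ∀ n, 0 < sn n := by
    intro n
    have h : (0:ℝ) ≤ ∑ k ∈ Finset.range n, r ^ k :=
      Finset.sum_nonneg fun k _ => pow_nonneg hr0.le k
    have : sn n = s₀ + ∑ k ∈ Finset.range n, r ^ k := rfl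
    rw [this]; linarith
  have hsnsucc : ∀ n, sn (n + 1) = sn n + r ^ n := by
    intro n
    show s₀ + ∑ k ∈ Finset.range (n+1), r ^ k = (s₀ + ∑ k ∈ Finset.range n, r ^ k) + r ^ n
    rw [Finset.sum_range_succ]; ring
  -- measurability and integrability of level sets
  have hms : ∀ s : ℝ, MeasurableSet {x | s < v x} :=
    fun s => measurableSet_lt measurable_const hv
  have hsubset0 : ∀ s : ℝ, 0 ≤ s → {x | s < v x} ⊆ {x | 0 < v x} :=
    fun s hs x hx => lt_of_le_of_lt hs hx
  have hintOn : ∀ s : ℝ, 0 ≤ s → IntegrableOn (fun x => v x - s) {x | s < v x} ν := by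
    intro s hs
    exact (hint.mono_set (hsubset0 s hs)).sub
      (integrableOn_const (measure_ne_top ν _))
  -- Chebyshev-type estimate
  have cheb : ∀ s t : ℝ, 0 ≤ s → s < t →
      (t - s) * (ν {x | t < v x}).toReal ≤ ∫ x in {x | s < v x}, (v x - s) ∂ν := by
    intro s t hs hst
    have hsub : {x | t < v x} ⊆ {x | s < v x} := fun x hx => hst.trans hx
    have h1 : ∫ x in {x | t < v x}, (v x - s) ∂ν ≤ ∫ x in {x | s < v x}, (v x - s) ∂ν := by
      apply setIntegral_mono_set (hintOn s hs)
      · filter_upwards [ae_restrict_mem (hms s)] with x hx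
        exact sub_nonneg.2 (le_of_lt hx)
      · exact HasSubset.Subset.eventuallyLE hsub
    have h2 : ∫ x in {x | t < v x}, (t - s) ∂ν ≤ ∫ x in {x | t < v x}, (v x - s) ∂ν := by
      apply setIntegral_mono_on
        (integrableOn_const (measure_ne_top ν _))
        ((hintOn s hs).mono_set hsub) (hms t)
      intro x hx
      have hx' : t < v x := hx
      linarith
    have h3 : ∫ x in {x | t < v x}, (t - s) ∂ν = (ν {x | t < v x}).toReal * (t - s) := by
      rw [setIntegral_const]; simp [smul_eq_mul]; exact Or.inl rfl
    nlinarith [h1, h2, h3]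
  -- the key iteration inequality
  have iter : ∀ s t : ℝ, 0 ≤ s → s < t →
      (t - s) * (ν {x | t < v x}).toReal ≤ C * ((ν {x | s < v x}).toReal) ^ (1 + δ) :=
    fun s t hs hst => (cheb s t hs hst).trans (hkey s hs)
  -- the algebraic identity driving the iteration
  have alg : ∀ n : ℕ, C * (K * (2⁻¹:ℝ) ^ n) ^ (1 + δ) = r ^ n * (K * (2⁻¹:ℝ) ^ (n + 1)) := by
    intro n
    have hp : ((2:ℝ)⁻¹) ^ n = (2:ℝ) ^ (-(n:ℝ)) := by
      rw [Real.rpow_neg (by norm_num), Real.rpow_natCast, inv_pow]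
    have hrn : r ^ n = (2:ℝ) ^ (-(n:ℝ) * δ) := by
      rw [hrdef, ← Real.rpow_natCast ((2:ℝ) ^ (-δ)) n, ← Real.rpow_mul (by norm_num)]
      ring_nf
    have hexp : (-(1/δ)) * (1 + δ) = (-(1/δ)) + (-1) := by field_simp; ring
    have hK1 : K ^ (1 + δ) = K * (2 * C)⁻¹ := by
      rw [hKdef, ← Real.rpow_mul h2C.le, hexp, Real.rpow_add h2C, Real.rpow_neg_one]
    have hexp2 : (-(n:ℝ)) * (1 + δ) = (-(n:ℝ)) + (-(n:ℝ) * δ) := by ring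
    rw [Real.mul_rpow hKpos.le (by positivity), hK1, hp,
      ← Real.rpow_mul (by norm_num : (0:ℝ) ≤ 2), hexp2, Real.rpow_add two_pos,
      ← hp, ← hrn, pow_succ]
    field_simp
  -- De Giorgi iteration
  have key : ∀ n, (ν {x | sn n < v x}).toReal ≤ K * (2⁻¹:ℝ) ^ n := by
    intro n
    induction n with
    | zero =>
      have hsn0eq : sn 0 = s₀ := by
        show s₀ + ∑ k ∈ Finset.range 0, r ^ k = s₀
        simp
      have h := cheb 0 s₀ le_rfl hs₀pos
      simp only [sub_zero] at h
      have h' : s₀ * (ν {x | s₀ < v x}).toReal ≤ V := by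
        calc s₀ * (ν {x | s₀ < v x}).toReal
            ≤ ∫ x in {x | 0 < v x}, v x ∂ν := h
          _ ≤ V := hbound
      have hKs : K * s₀ = V := by
        have hne : ((2*C) ^ (1/δ) : ℝ) ≠ 0 := (Real.rpow_pos_of_pos h2C (1/δ)).ne'
        rw [hKdef, hs₀def, Real.rpow_neg h2C.le, ← mul_assoc, inv_mul_cancel₀ hne, one_mul]
      rw [hsn0eq, pow_zero, mul_one]
      have := (mul_le_mul_iff_of_pos_right hs₀pos).1 (by rw [mul_comm] at h' ⊢; linarith [hKs] :
        (ν {x | s₀ < v x}).toReal * s₀ ≤ K * s₀)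
      exact this
    | succ n ih =>
      have hrnpos : (0:ℝ) < r ^ n := pow_pos hr0 n
      have hlt : sn n < sn (n + 1) := by rw [hsnsucc]; linarith
      have h := iter (sn n) (sn (n + 1)) (hsn0 n).le hlt
      have hd : sn (n + 1) - sn n = r ^ n := by rw [hsnsucc]; ring
      rw [hd] at h
      have hmono : C * ((ν {x | sn n < v x}).toReal) ^ (1 + δ)
          ≤ C * (K * (2⁻¹:ℝ) ^ n) ^ (1 + δ) :=
        mul_le_mul_of_nonneg_left
          (Real.rpow_le_rpow ENNReal.toReal_nonneg ih (by linarith)) hC.le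
      have h2 : r ^ n * (ν {x | sn (n + 1) < v x}).toReal
          ≤ r ^ n * (K * (2⁻¹:ℝ) ^ (n + 1)) := by
        calc r ^ n * (ν {x | sn (n + 1) < v x}).toReal
            ≤ C * ((ν {x | sn n < v x}).toReal) ^ (1 + δ) := h
          _ ≤ C * (K * (2⁻¹:ℝ) ^ n) ^ (1 + δ) := hmono
          _ = r ^ n * (K * (2⁻¹:ℝ) ^ (n + 1)) := alg n
      exact le_of_mul_le_mul_left h2 hrnpos
  -- pass to the limit
  have h1r : (0:ℝ) < 1 - r := by linarith
  have hsnS : ∀ n, sn n ≤ s₀ + 1 / (1 - r) := by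
    intro n
    have hgeom : ∑ k ∈ Finset.range n, r ^ k ≤ 1 / (1 - r) := by
      rw [geom_sum_eq hr1.ne n]
      have heq : (r ^ n - 1) / (r - 1) = (1 - r ^ n) / (1 - r) := by
        rw [← neg_sub 1 (r ^ n), ← neg_sub 1 r, neg_div_neg_eq]
      rw [heq]
      have hpn : (0:ℝ) ≤ r ^ n := pow_nonneg hr0.le n
      gcongr
      · linarith
    show s₀ + ∑ k ∈ Finset.range n, r ^ k ≤ s₀ + 1 / (1 - r)
    linarith
  have hsub : ∀ n, {x | s₀ + 1 / (1 - r) < v x} ⊆ {x | sn n < v x} :=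
    fun n x hx => lt_of_le_of_lt (hsnS n) hx
  have hle : ∀ n, (ν {x | s₀ + 1 / (1 - r) < v x}).toReal ≤ K * (2⁻¹:ℝ) ^ n := by
    intro n
    exact le_trans (ENNReal.toReal_mono (measure_ne_top ν _) (measure_mono (hsub n))) (key n)
  have htend : Filter.Tendsto (fun n : ℕ => K * (2⁻¹:ℝ) ^ n) Filter.atTop (nhds 0) := by
    have h := tendsto_pow_atTop_nhds_zero_of_lt_one
      (by norm_num : (0:ℝ) ≤ 2⁻¹) (by norm_num : (2⁻¹:ℝ) < 1)
    simpa using h.const_mul K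
  have h0 : (ν {x | s₀ + 1 / (1 - r) < v x}).toReal ≤ 0 := ge_of_tendsto' htend hle
  have hz : ν {x | s₀ + 1 / (1 - r) < v x} = 0 := by
    have heq : (ν {x | s₀ + 1 / (1 - r) < v x}).toReal = 0 :=
      le_antisymm h0 ENNReal.toReal_nonneg
    rcases (ENNReal.toReal_eq_zero_iff _).1 heq with h | h
    · exact h
    · exact absurd h (measure_ne_top ν _)
  rw [ae_iff]
  convert hz using 2
  ext x
  simp [not_le]
end

section
/- Let n ≥ 1 be an integer, a ∈ (0,1) and p > 0. Then there exists a constant C > 0 depending only on n, a and p with the following property: for every δ ∈ (0,1], define F_δ : ℂⁿ → ℝ by F_δ(z) = n·log a + log(a‖z‖² + δ) − (n − a n + 1)·log(‖z‖² + δ). Then for every z ∈ ℂⁿ with 0 < ‖z‖ ≤ 1, one has ‖∇F_δ(z)‖^p · exp(F_δ(z)) ≤ C·‖z‖^{2an − 2n − p}, where ∇F_δ denotes the gradient of F_δ viewed as a function on the underlying real inner product space of ℂⁿ. -/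
open Real in
set_option maxHeartbeats 1000000 in
/-- The uniform pointwise estimate (eqn:example) in Example 3.1: for
`F_δ(z) = n log a + log(a‖z‖²+δ) − (n−an+1) log(‖z‖²+δ)` on `ℂⁿ`, there is a
constant `C = C(n,a,p) > 0` with `‖∇F_δ(z)‖^p e^{F_δ(z)} ≤ C ‖z‖^{2an−2n−p}`
for all `δ ∈ (0,1]` and all `z` with `0 < ‖z‖ ≤ 1`. The gradient is taken with
respect to the underlying real inner product structure, so its norm is the norm
of the real Fréchet derivative. -/
theorem stmt_12 (n : ℕ) (hn : 1 ≤ n) (a p : ℝ) (ha : a ∈ Set.Ioo (0 : ℝ) 1)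
    (hp : 0 < p) :
    ∃ C : ℝ, 0 < C ∧ ∀ δ : ℝ, δ ∈ Set.Ioc (0 : ℝ) 1 →
      ∀ z : EuclideanSpace ℂ (Fin n), 0 < ‖z‖ → ‖z‖ ≤ 1 →
        ‖fderiv ℝ (fun w : EuclideanSpace ℂ (Fin n) =>
            (n : ℝ) * Real.log a + Real.log (a * ‖w‖ ^ 2 + δ) -
              ((n : ℝ) - a * n + 1) * Real.log (‖w‖ ^ 2 + δ)) z‖ ^ p *
          Real.exp ((n : ℝ) * Real.log a + Real.log (a * ‖z‖ ^ 2 + δ) -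
            ((n : ℝ) - a * n + 1) * Real.log (‖z‖ ^ 2 + δ)) ≤
        C * ‖z‖ ^ (2 * a * n - 2 * n - p) := by
  obtain ⟨ha0, ha1⟩ := ha
  set c : ℝ := (n : ℝ) - a * n + 1 with hc
  have hn1 : (1 : ℝ) ≤ (n : ℝ) := by exact_mod_cast hn
  have hc1 : 1 ≤ c := by nlinarith
  have hc0 : 0 < c := lt_of_lt_of_le one_pos hc1
  refine ⟨(2 * (1 + c)) ^ p * a ^ n, by positivity, ?_⟩
  rintro δ ⟨hδ0, hδ1⟩ z hz hz1
  set r : ℝ := ‖z‖ with hr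
  have ht : 0 < r ^ 2 := by positivity
  have hat : 0 < a * r ^ 2 + δ := by positivity
  have htd : 0 < r ^ 2 + δ := by positivity
  -- derivative computation
  set G : EuclideanSpace ℂ (Fin n) →L[ℝ] ℝ := 2 • innerSL ℝ z with hG
  have hGd : HasFDerivAt (fun w : EuclideanSpace ℂ (Fin n) => ‖w‖ ^ 2) G z :=
    (hasStrictFDerivAt_norm_sq z).hasFDerivAt
  have h1 : HasFDerivAt (fun w : EuclideanSpace ℂ (Fin n) => a * ‖w‖ ^ 2 + δ)
      (a • G) z := (hGd.const_mul a).add_const δ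
  have h2 : HasFDerivAt (fun w : EuclideanSpace ℂ (Fin n) => ‖w‖ ^ 2 + δ) G z :=
    hGd.add_const δ
  have hl1 := h1.log (ne_of_gt hat)
  have hl2 := h2.log (ne_of_gt htd)
  set D : EuclideanSpace ℂ (Fin n) →L[ℝ] ℝ :=
    (a * r ^ 2 + δ)⁻¹ • (a • G) - c • ((r ^ 2 + δ)⁻¹ • G) with hD
  have hF : HasFDerivAt (fun w : EuclideanSpace ℂ (Fin n) =>
      (n : ℝ) * Real.log a + Real.log (a * ‖w‖ ^ 2 + δ) -
        c * Real.log (‖w‖ ^ 2 + δ)) D z := by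
    exact (hl1.const_add ((n : ℝ) * Real.log a)).sub (hl2.const_mul c)
  rw [hF.fderiv]
  clear_value r
  -- norm of G
  have hGn : ‖G‖ ≤ 2 * r := by
    calc ‖G‖ = ‖innerSL ℝ z + innerSL ℝ z‖ := by rw [hG, two_smul]
    _ ≤ ‖innerSL ℝ z‖ + ‖innerSL ℝ z‖ := norm_add_le _ _
    _ = 2 * r := by rw [innerSL_apply_norm, ← hr]; ring
  -- bound on ‖D‖
  have hDb : ‖D‖ ≤ 2 * (1 + c) / r := by
    have hA : ‖(a * r ^ 2 + δ)⁻¹ • (a • G)‖ ≤ 2 / r := by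
      rw [norm_smul (a * r ^ 2 + δ)⁻¹ (a • G), norm_smul a G,
        Real.norm_eq_abs, Real.norm_eq_abs,
        abs_of_pos (inv_pos.2 hat), abs_of_pos ha0]
      have key : (a * r ^ 2 + δ)⁻¹ * a ≤ (r ^ 2)⁻¹ := by
        rw [inv_mul_le_iff₀ hat, ← div_eq_mul_inv, le_div_iff₀ ht]
        nlinarith
      calc (a * r ^ 2 + δ)⁻¹ * (a * ‖G‖) ≤ (r ^ 2)⁻¹ * (2 * r) := by
            rw [← mul_assoc]
            exact mul_le_mul key hGn (norm_nonneg _) (by positivity)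
      _ = 2 / r := by field_simp
    have hB : ‖c • ((r ^ 2 + δ)⁻¹ • G)‖ ≤ 2 * c / r := by
      rw [norm_smul c ((r ^ 2 + δ)⁻¹ • G), norm_smul (r ^ 2 + δ)⁻¹ G,
        Real.norm_eq_abs, Real.norm_eq_abs,
        abs_of_pos hc0, abs_of_pos (inv_pos.2 htd)]
      have key : (r ^ 2 + δ)⁻¹ ≤ (r ^ 2)⁻¹ := by
        apply inv_anti₀ ht; linarith
      calc c * ((r ^ 2 + δ)⁻¹ * ‖G‖) ≤ c * ((r ^ 2)⁻¹ * (2 * r)) := by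
            apply mul_le_mul_of_nonneg_left _ (le_of_lt hc0)
            exact mul_le_mul key hGn (norm_nonneg _) (by positivity)
      _ = 2 * c / r := by field_simp
    calc ‖D‖ ≤ ‖(a * r ^ 2 + δ)⁻¹ • (a • G)‖ + ‖c • ((r ^ 2 + δ)⁻¹ • G)‖ :=
          norm_sub_le _ _
    _ ≤ 2 / r + 2 * c / r := add_le_add hA hB
    _ = 2 * (1 + c) / r := by ring
  -- bound on exp F
  have hexp : Real.exp ((n : ℝ) * Real.log a + Real.log (a * r ^ 2 + δ) -
      c * Real.log (r ^ 2 + δ)) ≤ a ^ n * r ^ (2 * a * n - 2 * n) := by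
    have e1 : Real.exp ((n : ℝ) * Real.log a) = a ^ n := by
      rw [← Real.log_pow, Real.exp_log (by positivity)]
    have e3 : Real.exp (-(c * Real.log (r ^ 2 + δ))) = (r ^ 2 + δ) ^ (-c) := by
      rw [Real.rpow_def_of_pos htd]; ring_nf
    have step : Real.exp ((n : ℝ) * Real.log a + Real.log (a * r ^ 2 + δ) -
        c * Real.log (r ^ 2 + δ)) =
        a ^ n * ((a * r ^ 2 + δ) * (r ^ 2 + δ) ^ (-c)) := by
      rw [sub_eq_add_neg, Real.exp_add, Real.exp_add, e1, e3,
        Real.exp_log hat, mul_assoc]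
    rw [step]
    have b1 : (a * r ^ 2 + δ) * (r ^ 2 + δ) ^ (-c) ≤ (r ^ 2 + δ) ^ (1 - c) := by
      have : (a * r ^ 2 + δ) ≤ (r ^ 2 + δ) := by nlinarith
      calc (a * r ^ 2 + δ) * (r ^ 2 + δ) ^ (-c)
          ≤ (r ^ 2 + δ) * (r ^ 2 + δ) ^ (-c) :=
            mul_le_mul_of_nonneg_right this (Real.rpow_nonneg (le_of_lt htd) _)
      _ = (r ^ 2 + δ) ^ (1 - c) := by
            rw [sub_eq_add_neg, Real.rpow_add htd, Real.rpow_one]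
    have b2 : (r ^ 2 + δ) ^ (1 - c) ≤ (r ^ 2) ^ (1 - c) := by
      apply Real.rpow_le_rpow_of_nonpos ht (by linarith)
      nlinarith
    have b3 : (r ^ 2 : ℝ) ^ (1 - c) = r ^ (2 * a * n - 2 * n) := by
      rw [← Real.rpow_natCast r 2, ← Real.rpow_mul (le_of_lt hz)]
      congr 1
      push_cast
      rw [hc]; ring
    calc a ^ n * ((a * r ^ 2 + δ) * (r ^ 2 + δ) ^ (-c))
        ≤ a ^ n * (r ^ 2 + δ) ^ (1 - c) :=
          mul_le_mul_of_nonneg_left b1 (by positivity)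
    _ ≤ a ^ n * (r ^ 2) ^ (1 - c) := mul_le_mul_of_nonneg_left b2 (by positivity)
    _ = a ^ n * r ^ (2 * a * n - 2 * n) := by rw [b3]
  -- combine
  have hDp : ‖D‖ ^ p ≤ (2 * (1 + c)) ^ p * r ^ (-p) := by
    calc ‖D‖ ^ p ≤ (2 * (1 + c) / r) ^ p :=
          Real.rpow_le_rpow (norm_nonneg _) hDb (le_of_lt hp)
    _ = (2 * (1 + c)) ^ p * r ^ (-p) := by
        rw [Real.div_rpow (by positivity) (le_of_lt hz), div_eq_mul_inv,
          ← Real.rpow_neg (le_of_lt hz)]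
  calc ‖D‖ ^ p * Real.exp ((n : ℝ) * Real.log a + Real.log (a * r ^ 2 + δ) -
        c * Real.log (r ^ 2 + δ))
      ≤ ((2 * (1 + c)) ^ p * r ^ (-p)) * (a ^ n * r ^ (2 * a * n - 2 * n)) := by
        apply mul_le_mul hDp hexp (le_of_lt (Real.exp_pos _)) (by positivity)
  _ = (2 * (1 + c)) ^ p * a ^ n * r ^ (2 * a * n - 2 * n - p) := by
      rw [show (2 * a * n - 2 * n - p) = -p + (2 * a * n - 2 * n) by ring,
        Real.rpow_add hz]
      ring
end
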